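/- Let l ≥ 1 be an integer, δ ∈ k, and H̃ = X^{l+1} + δ·X^{2l+1}. (a) For every c₁ ∈ k with c₁^l = 1 and every c ∈ k there exists a unique Φ ∈ k⟦X⟧ with constant coefficient 0, coefficient of X equal to c₁, and coefficient of X^{l+1} equal to c, such that H̃∘Φ = Φ′·H̃; moreover every order-1 solution of H̃∘Φ = Φ′·H̃ has (coefficient of X)^l = 1. (b) Any two order-1 solutions Φ₁, Φ₂ of H̃∘Φ = Φ′·H̃ commute: Φ₁∘Φ₂ = Φ₂∘Φ₁. -/

import Mathlib

/-!
Write `E(Φ) = H̃∘Φ - Φ′·H̃`. If `Φ = aX + …` is changed at order `m ≥ 2`, then `E(Φ)` first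
changes at order `m + l`, by `(l + 1)aˡ - m` times the change. When `aˡ = 1` this factor
vanishes only at the resonant order `m = l + 1`, so a solution is determined by `a` and its
coefficient of `X^(l+1)`, and every coefficient can be solved for recursively; the coefficient of
`X^(l+1)` in `E(Φ)` is `a^(l+1) - a`, which forces `aˡ = 1`. By the chain rule solutions are closed
under composition. A solution has no terms of degree `2, …, l`, so `Φ₁∘Φ₂` and `Φ₂∘Φ₁` have the same
coefficients of `X` and `X^(l+1)`, and therefore coincide.
-/

open PowerSeries

variable {k : Type*} [Field k] [CharZero k]

/-- Substitution of `g` (with zero constant coefficient) into `f`. -/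
noncomputable def comp (f g : PowerSeries k) : PowerSeries k :=
  PowerSeries.mk fun m => ∑ n ∈ Finset.range (m + 1),
    PowerSeries.coeff n f * PowerSeries.coeff m (g ^ n)

/-- The normal form generator. -/
noncomputable def Htilde (l : ℕ) (δ : k) : PowerSeries k :=
  X ^ (l + 1) + C δ * X ^ (2 * l + 1)

section PowerSeries

variable {R : Type*} [CommRing R]

theorem coeff_eq_of_X_pow_dvd_sub {f g : R⟦X⟧} {m j : ℕ} (h : X ^ m ∣ f - g) (hj : j < m) :
    coeff j f = coeff j g :=
  sub_eq_zero.mp (by rw [← map_sub]; exact X_pow_dvd_iff.mp h j hj)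

theorem eq_of_forall_X_pow_dvd_sub {f g : R⟦X⟧} (h : ∀ n, X ^ n ∣ f - g) : f = g :=
  ext fun n ↦ coeff_eq_of_X_pow_dvd_sub (h (n + 1)) n.lt_succ_self

theorem X_pow_succ_dvd_iff {f : R⟦X⟧} {n : ℕ} :
    X ^ (n + 1) ∣ f ↔ X ^ n ∣ f ∧ coeff n f = 0 := by
  simp only [X_pow_dvd_iff, Nat.lt_succ_iff_lt_or_eq, or_imp, forall_and, forall_eq]

theorem coeff_X_pow_mul_self (f : R⟦X⟧) (n : ℕ) : coeff n (X ^ n * f) = constantCoeff f := by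
  simpa using coeff_X_pow_mul f n 0

theorem coeff_pow_of_constantCoeff_eq_zero {φ : R⟦X⟧} (hφ : constantCoeff φ = 0) (n : ℕ) :
    coeff n (φ ^ n) = coeff 1 φ ^ n := by
  obtain ⟨u, rfl⟩ := X_dvd_iff.mpr hφ
  rw [mul_pow, coeff_X_pow_mul_self, map_pow]
  simp

theorem X_pow_dvd_subst {f φ : R⟦X⟧} {m : ℕ} (hf : X ^ m ∣ f) (hφ : constantCoeff φ = 0) :
    X ^ m ∣ f.subst φ := by
  have hφ' := HasSubst.of_constantCoeff_zero' hφ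
  obtain ⟨g, rfl⟩ := hf
  rw [subst_mul hφ', subst_pow hφ', subst_X hφ']
  exact (pow_dvd_pow_of_dvd (X_dvd_iff.mpr hφ) m).mul_right _

theorem coeff_subst_of_X_pow_dvd_sub {Φ ψ : R⟦X⟧} {a c : R} {m : ℕ} (hm : 2 ≤ m)
    (hΦ : X ^ (m + 1) ∣ Φ - (C a * X + C c * X ^ m)) (hψ : constantCoeff ψ = 0) :
    coeff 1 (Φ.subst ψ) = a * coeff 1 ψ ∧
      coeff m (Φ.subst ψ) = a * coeff m ψ + c * coeff 1 ψ ^ m := by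
  have hψ' := HasSubst.of_constantCoeff_zero' hψ
  have h := X_pow_dvd_subst hΦ hψ
  rw [subst_sub hψ', subst_add hψ', subst_mul hψ', subst_mul hψ', subst_C, subst_C, subst_X hψ',
    subst_pow hψ', subst_X hψ'] at h
  change X ^ (m + 1) ∣ Φ.subst ψ - (C a * ψ + C c * ψ ^ m) at h
  have hpow : X ^ m ∣ ψ ^ m := pow_dvd_pow_of_dvd (X_dvd_iff.mpr hψ) m
  constructor
  · rw [coeff_eq_of_X_pow_dvd_sub h (by omega)]
    simp [X_pow_dvd_iff.mp hpow 1 (by omega)]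
  · rw [coeff_eq_of_X_pow_dvd_sub h (by omega)]
    simp [coeff_pow_of_constantCoeff_eq_zero hψ]

theorem X_pow_add_dvd_mk_coeff_sub {f : ℕ → R⟦X⟧} {d : ℕ} (hd : 1 ≤ d)
    (hf : ∀ n, X ^ (n + d) ∣ f (n + 1) - f n) (n : ℕ) :
    X ^ (n + d) ∣ mk (fun j ↦ coeff j (f j)) - f n := by
  have hmono : ∀ n n', n ≤ n' → X ^ (n + d) ∣ f n' - f n := by
    intro n n' hn
    induction n', hn using Nat.le_induction with
    | base => simp
    | succ n' hn ih =>
      rw [← sub_add_sub_cancel]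
      exact dvd_add ((pow_dvd_pow X (by omega)).trans (hf n')) ih
  refine X_pow_dvd_iff.mpr fun j hj ↦ ?_
  rw [map_sub, coeff_mk, sub_eq_zero]
  rcases le_total j n with hjn | hnj
  · exact (coeff_eq_of_X_pow_dvd_sub (hmono j n hjn) (by omega)).symm
  · exact coeff_eq_of_X_pow_dvd_sub (hmono n j hnj) hj

def IsAczelJabotinskySolution (H Φ : R⟦X⟧) : Prop :=
  H.subst Φ = d⁄dX R Φ * H

theorem IsAczelJabotinskySolution.subst {H Φ Ψ : R⟦X⟧}
    (hΦ : IsAczelJabotinskySolution H Φ) (hΨ : IsAczelJabotinskySolution H Ψ)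
    (hΦ' : HasSubst Φ) (hΨ' : HasSubst Ψ) :
    IsAczelJabotinskySolution H (Φ.subst Ψ) := by
  unfold IsAczelJabotinskySolution at *
  rw [← subst_comp_subst_apply hΦ' hΨ', hΦ, subst_mul hΨ', hΨ, derivative_subst hΨ']
  ring

end PowerSeries

section Defect

omit [CharZero k]

theorem comp_eq_subst (f : k⟦X⟧) {g : k⟦X⟧} (hg : constantCoeff g = 0) :
    comp f g = f.subst g := by
  ext m
  rw [comp, coeff_mk, coeff_subst' (HasSubst.of_constantCoeff_zero' hg)]
  refine (finsum_eq_sum_of_support_subset _ fun n hn ↦ ?_).symm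
  simp only [Function.mem_support, Finset.coe_range, Set.mem_Iio] at hn ⊢
  by_contra! hmn
  exact hn (by rw [X_pow_dvd_iff.mp (pow_dvd_pow_of_dvd (X_dvd_iff.mpr hg) n) m (by omega),
    mul_zero])

set_option linter.deprecated false in
theorem comp_eq_derivativeFun_mul_iff (H : k⟦X⟧) {Φ : k⟦X⟧} (hΦ : constantCoeff Φ = 0) :
    comp H Φ = derivativeFun Φ * H ↔ IsAczelJabotinskySolution H Φ := by
  rw [comp_eq_subst H hΦ]
  rfl

variable (l : ℕ) (δ : k)

/-- `H̃∘Φ - Φ′·H̃`, written without substitution so that it needs no hypothesis on `Φ`. -/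
noncomputable def ajDefect (Φ : k⟦X⟧) : k⟦X⟧ :=
  Φ ^ (l + 1) + C δ * Φ ^ (2 * l + 1) - d⁄dX k Φ * Htilde l δ

theorem isAczelJabotinskySolution_Htilde_iff {Φ : k⟦X⟧} (hΦ : constantCoeff Φ = 0) :
    IsAczelJabotinskySolution (Htilde l δ) Φ ↔ ajDefect l δ Φ = 0 := by
  have hΦ' := HasSubst.of_constantCoeff_zero' hΦ
  rw [IsAczelJabotinskySolution, ajDefect, sub_eq_zero, Htilde, subst_add hΦ', subst_mul hΦ',
    subst_pow hΦ', subst_pow hΦ', subst_X hΦ', subst_C]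
  rfl

theorem ajDefect_subst_eq_zero {Φ Ψ : k⟦X⟧} (hΦ : constantCoeff Φ = 0)
    (hΨ : constantCoeff Ψ = 0) (hEΦ : ajDefect l δ Φ = 0) (hEΨ : ajDefect l δ Ψ = 0) :
    ajDefect l δ (Φ.subst Ψ) = 0 := by
  rw [← isAczelJabotinskySolution_Htilde_iff l δ (constantCoeff_subst_eq_zero hΨ _ hΦ)]
  exact ((isAczelJabotinskySolution_Htilde_iff l δ hΦ).mpr hEΦ).subst
    ((isAczelJabotinskySolution_Htilde_iff l δ hΨ).mpr hEΨ)
    (HasSubst.of_constantCoeff_zero' hΦ) (HasSubst.of_constantCoeff_zero' hΨ)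

theorem ajDefect_C_mul_X {a : k} (ha : a ^ l = 1) : ajDefect l δ (C a * X) = 0 := by
  have ha' : ∀ j, a ^ (l * j + 1) = a := fun j ↦ by rw [pow_succ, pow_mul, ha, one_pow, one_mul]
  simp only [ajDefect, Htilde, mul_pow, ← map_pow, Derivation.leibniz, derivative_C,
    derivative_X, smul_eq_mul, mul_one, mul_zero, add_zero]
  rw [show 2 * l + 1 = l * 2 + 1 by ring, ha', show l + 1 = l * 1 + 1 by ring, ha']
  ring

theorem coeff_succ_ajDefect {Φ : k⟦X⟧} (hΦ : constantCoeff Φ = 0) :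
    coeff (l + 1) (ajDefect l δ Φ) = coeff 1 Φ ^ (l + 1) - coeff 1 Φ := by
  obtain ⟨u, rfl⟩ := X_dvd_iff.mpr hΦ
  have : ajDefect l δ (X * u) = X ^ (l + 1) *
      (u ^ (l + 1) + C δ * X ^ l * u ^ (2 * l + 1) - (u + X * d⁄dX k u) * (1 + C δ * X ^ l)) := by
    simp only [ajDefect, Htilde, Derivation.leibniz, derivative_X, smul_eq_mul]
    ring
  rw [this, coeff_X_pow_mul_self]
  rcases l.eq_zero_or_pos with rfl | hl
  · simp
    ring
  · simp [hl.ne']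

theorem pow_eq_one_of_ajDefect_eq_zero {Φ : k⟦X⟧} (hΦ : constantCoeff Φ = 0)
    (h1 : coeff 1 Φ ≠ 0) (h : ajDefect l δ Φ = 0) : coeff 1 Φ ^ l = 1 := by
  have := coeff_succ_ajDefect l δ hΦ
  rw [h, map_zero, eq_comm, sub_eq_zero, pow_succ'] at this
  exact (mul_eq_left₀ h1).mp this

theorem ajDefect_sub_eq_X_pow_mul (hl : 1 ≤ l) {Φ Ψ : k⟦X⟧} (hΨ : constantCoeff Ψ = 0) {m : ℕ}
    (hm : 2 ≤ m) (h : X ^ m ∣ Φ - Ψ) :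
    ∃ R, ajDefect l δ Φ - ajDefect l δ Ψ = X ^ (m + l) * R ∧
      constantCoeff R = (((l : k) + 1) * coeff 1 Ψ ^ l - m) * coeff m (Φ - Ψ) := by
  obtain ⟨u, rfl⟩ := X_dvd_iff.mpr hΨ
  obtain ⟨n, rfl⟩ : ∃ n, m = n + 2 := ⟨m - 2, by omega⟩
  obtain ⟨w, hw⟩ := h
  obtain rfl : Φ = X * (u + X ^ (n + 1) * w) := by linear_combination hw
  set v := u + X ^ (n + 1) * w with hv
  set G : ℕ → k⟦X⟧ := fun p ↦ ∑ i ∈ Finset.range p, v ^ i * u ^ (p - 1 - i) with hG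
  have hgeom (p : ℕ) : v ^ p - u ^ p = X ^ (n + 1) * w * G p := by
    rw [← geom_sum₂_mul, hv]
    ring
  have hd : d⁄dX k (X * v) - d⁄dX k (X * u) =
      X ^ (n + 1) * (((n : k⟦X⟧) + 2) * w + X * d⁄dX k w) := by
    rw [← map_sub, show X * v - X * u = X ^ (n + 2) * w by rw [hv]; ring, Derivation.leibniz,
      Derivation.leibniz_pow, derivative_X]
    simp only [smul_eq_mul, nsmul_eq_mul, mul_one]
    push_cast
    ring
  clear_value v G
  refine ⟨w * G (l + 1) + C δ * X ^ l * w * G (2 * l + 1) -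
      (((n : k⟦X⟧) + 2) * w + X * d⁄dX k w) * (1 + C δ * X ^ l), ?_, ?_⟩
  · simp only [ajDefect, Htilde]
    linear_combination X ^ (l + 1) * hgeom (l + 1) + C δ * X ^ (2 * l + 1) * hgeom (2 * l + 1)
      - (X ^ (l + 1) + C δ * X ^ (2 * l + 1)) * hd
  · have hv0 : constantCoeff v = constantCoeff u := by simp [hv]
    have hG0 : constantCoeff (G (l + 1)) = (l + 1) * constantCoeff u ^ l := by
      simp only [hG, map_sum, map_mul, map_pow, hv0, ← pow_add, Nat.add_sub_cancel]
      rw [Finset.sum_congr rfl fun i hi ↦ by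
        rw [Nat.add_sub_cancel' (Finset.mem_range_succ_iff.mp hi)]]
      simp
    rw [show X * v - X * u = X ^ (n + 2) * w by rw [hv]; ring, coeff_X_pow_mul_self]
    simp [hG0, zero_pow (by omega : l ≠ 0), map_ofNat]
    ring

/-- The coefficient placed at `X^(n+l+2)` kills the coefficient of `X^(n+2l+2)` in the defect:
by `ajDefect_sub_eq_X_pow_mul` with `aˡ = 1`, it enters there with the factor `-(n + 1)`. -/
noncomputable def ajApprox (a c : k) : ℕ → k⟦X⟧
  | 0 => C a * X + C c * X ^ (l + 1)
  | n + 1 => ajApprox a c n +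
      X ^ (n + l + 2) * C (coeff (n + 2 * l + 2) (ajDefect l δ (ajApprox a c n)) / (n + 1))

noncomputable def ajSolution (a c : k) : k⟦X⟧ :=
  mk fun j ↦ coeff j (ajApprox l δ a c j)

variable (a c : k)

theorem constantCoeff_ajApprox (n : ℕ) : constantCoeff (ajApprox l δ a c n) = 0 := by
  induction n with
  | zero => simp [ajApprox]
  | succ n ih => simp [ajApprox, ih]

theorem coeff_one_ajApprox (hl : 1 ≤ l) (n : ℕ) : coeff 1 (ajApprox l δ a c n) = a := by
  induction n with
  | zero =>
    simp [ajApprox, coeff_X_pow]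
    omega
  | succ n ih => simp [ajApprox, ih]

theorem X_pow_dvd_ajApprox_succ_sub (n : ℕ) :
    X ^ (n + l + 2) ∣ ajApprox l δ a c (n + 1) - ajApprox l δ a c n :=
  ⟨_, add_sub_cancel_left _ _⟩

theorem X_pow_dvd_ajSolution_sub (n : ℕ) :
    X ^ (n + l + 2) ∣ ajSolution l δ a c - ajApprox l δ a c n :=
  X_pow_add_dvd_mk_coeff_sub (d := l + 2) (by omega) (X_pow_dvd_ajApprox_succ_sub l δ a c) n

end Defect

variable (l : ℕ) (δ : k)

theorem coeff_sub_eq_zero_of_ajDefect_eq_zero (hl : 1 ≤ l) {Φ Ψ : k⟦X⟧}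
    (hΨ : constantCoeff Ψ = 0) (hEΦ : ajDefect l δ Φ = 0) (hEΨ : ajDefect l δ Ψ = 0)
    (ha : coeff 1 Ψ ^ l = 1) {m : ℕ} (hm : 2 ≤ m) (hml : m ≠ l + 1) (h : X ^ m ∣ Φ - Ψ) :
    coeff m (Φ - Ψ) = 0 := by
  obtain ⟨R, hR, hR0⟩ := ajDefect_sub_eq_X_pow_mul l δ hl hΨ hm h
  rw [hEΦ, hEΨ, sub_zero, eq_comm, mul_eq_zero, or_iff_right (pow_ne_zero _ X_ne_zero)] at hR
  rw [hR, map_zero, ha, mul_one, eq_comm, mul_eq_zero] at hR0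
  refine hR0.resolve_left fun h ↦ hml ?_
  exact_mod_cast (sub_eq_zero.mp h).symm

theorem X_pow_dvd_sub_of_ajDefect_eq_zero (hl : 1 ≤ l) {Φ Ψ : k⟦X⟧}
    (hΦ : constantCoeff Φ = 0) (hΨ : constantCoeff Ψ = 0)
    (hEΦ : ajDefect l δ Φ = 0) (hEΨ : ajDefect l δ Ψ = 0)
    (h1 : coeff 1 Φ = coeff 1 Ψ) (ha : coeff 1 Ψ ^ l = 1) {m : ℕ} (hm : m ≤ l + 1) :
    X ^ m ∣ Φ - Ψ := by
  induction m with
  | zero => simp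
  | succ m ih =>
    refine X_pow_succ_dvd_iff.mpr ⟨ih (by omega), ?_⟩
    match m with
    | 0 => simp [hΦ, hΨ]
    | 1 => simp [h1]
    | m + 2 =>
      exact coeff_sub_eq_zero_of_ajDefect_eq_zero l δ hl hΨ hEΦ hEΨ ha (by omega) (by omega)
        (ih (by omega))

theorem eq_of_ajDefect_eq_zero (hl : 1 ≤ l) {Φ Ψ : k⟦X⟧}
    (hΦ : constantCoeff Φ = 0) (hΨ : constantCoeff Ψ = 0)
    (hEΦ : ajDefect l δ Φ = 0) (hEΨ : ajDefect l δ Ψ = 0)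
    (h1 : coeff 1 Φ = coeff 1 Ψ) (ha : coeff 1 Ψ ^ l = 1)
    (hc : coeff (l + 1) Φ = coeff (l + 1) Ψ) : Φ = Ψ := by
  refine eq_of_forall_X_pow_dvd_sub fun m ↦ ?_
  induction m with
  | zero => simp
  | succ m ih =>
    rcases lt_trichotomy m (l + 1) with hm | rfl | hm
    · exact X_pow_dvd_sub_of_ajDefect_eq_zero l δ hl hΦ hΨ hEΦ hEΨ h1 ha hm
    · exact X_pow_succ_dvd_iff.mpr ⟨ih, by rw [map_sub, hc, sub_self]⟩
    · exact X_pow_succ_dvd_iff.mpr ⟨ih,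
        coeff_sub_eq_zero_of_ajDefect_eq_zero l δ hl hΨ hEΦ hEΨ ha (by omega) hm.ne' ih⟩

theorem X_pow_dvd_sub_normalForm_of_ajDefect_eq_zero (hl : 1 ≤ l) {Φ : k⟦X⟧}
    (hΦ : constantCoeff Φ = 0) (hE : ajDefect l δ Φ = 0) (ha : coeff 1 Φ ^ l = 1) :
    X ^ (l + 2) ∣ Φ - (C (coeff 1 Φ) * X + C (coeff (l + 1) Φ) * X ^ (l + 1)) := by
  have hlin := X_pow_dvd_sub_of_ajDefect_eq_zero l δ hl hΦ (by simp) hE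
    (ajDefect_C_mul_X l δ ha) (by simp) (by simpa using ha) le_rfl
  refine X_pow_succ_dvd_iff.mpr ⟨?_, ?_⟩
  · rw [← sub_sub]
    exact dvd_sub hlin (dvd_mul_left _ _)
  · simp [coeff_C]
    omega

theorem subst_comm_of_ajDefect_eq_zero (hl : 1 ≤ l) {Φ Ψ : k⟦X⟧}
    (hΦ : constantCoeff Φ = 0) (hΨ : constantCoeff Ψ = 0) (hΦ1 : coeff 1 Φ ≠ 0)
    (hΨ1 : coeff 1 Ψ ≠ 0) (hEΦ : ajDefect l δ Φ = 0) (hEΨ : ajDefect l δ Ψ = 0) :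
    Φ.subst Ψ = Ψ.subst Φ := by
  have ha := pow_eq_one_of_ajDefect_eq_zero l δ hΦ hΦ1 hEΦ
  have hb := pow_eq_one_of_ajDefect_eq_zero l δ hΨ hΨ1 hEΨ
  obtain ⟨h1ΦΨ, hcΦΨ⟩ := coeff_subst_of_X_pow_dvd_sub (by omega)
    (X_pow_dvd_sub_normalForm_of_ajDefect_eq_zero l δ hl hΦ hEΦ ha) hΨ
  obtain ⟨h1ΨΦ, hcΨΦ⟩ := coeff_subst_of_X_pow_dvd_sub (by omega)
    (X_pow_dvd_sub_normalForm_of_ajDefect_eq_zero l δ hl hΨ hEΨ hb) hΦ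
  refine eq_of_ajDefect_eq_zero l δ hl (constantCoeff_subst_eq_zero hΨ _ hΦ)
    (constantCoeff_subst_eq_zero hΦ _ hΨ) (ajDefect_subst_eq_zero l δ hΦ hΨ hEΦ hEΨ)
    (ajDefect_subst_eq_zero l δ hΨ hΦ hEΨ hEΦ) ?_ ?_ ?_
  · rw [h1ΦΨ, h1ΨΦ, mul_comm]
  · rw [h1ΨΦ, mul_pow, ha, hb, one_mul]
  · rw [hcΦΨ, hcΨΦ, pow_succ, hb, pow_succ, ha]
    ring

theorem X_pow_dvd_ajDefect_ajApprox (hl : 1 ≤ l) {a : k} (ha : a ^ l = 1) (c : k) (n : ℕ) :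
    X ^ (n + 2 * l + 2) ∣ ajDefect l δ (ajApprox l δ a c n) := by
  induction n with
  | zero =>
    obtain ⟨R, hR, hR0⟩ := ajDefect_sub_eq_X_pow_mul l δ hl (Φ := ajApprox l δ a c 0)
      (Ψ := C a * X) (by simp) (by omega : 2 ≤ l + 1) ⟨C c, by simp [ajApprox, mul_comm]⟩
    rw [ajDefect_C_mul_X l δ ha, sub_zero] at hR
    rw [hR, show 0 + 2 * l + 2 = l + 1 + l + 1 by ring, pow_succ, mul_dvd_mul_iff_left
      (pow_ne_zero _ X_ne_zero), X_dvd_iff, hR0]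
    simp [ha]
  | succ n ih =>
    set e := coeff (n + 2 * l + 2) (ajDefect l δ (ajApprox l δ a c n))
    obtain ⟨R, hR, hR0⟩ := ajDefect_sub_eq_X_pow_mul l δ hl (constantCoeff_ajApprox l δ a c n)
      (by omega) (X_pow_dvd_ajApprox_succ_sub l δ a c n)
    have hR0' : constantCoeff R = -e := by
      rw [hR0, coeff_one_ajApprox l δ a c hl, ha, ajApprox, add_sub_cancel_left,
        coeff_X_pow_mul_self, constantCoeff_C]
      field_simp
      push_cast
      ring
    rw [sub_eq_iff_eq_add, show n + l + 2 + l = n + 2 * l + 2 by ring] at hR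
    rw [show n + 1 + 2 * l + 2 = n + 2 * l + 2 + 1 by ring, X_pow_succ_dvd_iff, hR, map_add,
      coeff_X_pow_mul_self, hR0']
    exact ⟨dvd_add (dvd_mul_right _ _) ih, neg_add_cancel e⟩

theorem ajSolution_spec (hl : 1 ≤ l) {a : k} (ha : a ^ l = 1) (c : k) :
    constantCoeff (ajSolution l δ a c) = 0 ∧ coeff 1 (ajSolution l δ a c) = a ∧
      coeff (l + 1) (ajSolution l δ a c) = c ∧ ajDefect l δ (ajSolution l δ a c) = 0 := by
  have hl0 : l ≠ 0 := by omega
  have hlow {j : ℕ} (hj : j < l + 2) :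
      coeff j (ajSolution l δ a c) = coeff j (C a * X + C c * X ^ (l + 1)) :=
    coeff_eq_of_X_pow_dvd_sub (X_pow_dvd_ajSolution_sub l δ a c 0) (by omega)
  refine ⟨?_, ?_, ?_, ?_⟩
  · simpa using hlow (j := 0) (by omega)
  · simpa [coeff_X_pow, hl0] using hlow (j := 1) (by omega)
  · simpa [coeff_C, hl0] using hlow (j := l + 1) (by omega)
  · refine eq_of_forall_X_pow_dvd_sub fun n ↦ ?_
    obtain ⟨R, hR, -⟩ := ajDefect_sub_eq_X_pow_mul l δ hl (constantCoeff_ajApprox l δ a c n)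
      (by omega) (X_pow_dvd_ajSolution_sub l δ a c n)
    rw [sub_zero, ← sub_add_cancel (ajDefect l δ _) (ajDefect l δ (ajApprox l δ a c n)), hR]
    refine (pow_dvd_pow X (by omega : n ≤ n + 2 * l + 2)).trans (dvd_add ?_
      (X_pow_dvd_ajDefect_ajApprox l δ hl ha c n))
    exact (pow_dvd_pow X (by omega)).trans (dvd_mul_right _ _)

/-- For `H̃ = X^(l+1) + δX^(2l+1)`:
(a) for every `l`-th root of unity `c₁` and every `c ∈ k` there is a unique
solution `Φ = c₁X + … + cX^(l+1) + …` of `H̃∘Φ = Φ′·H̃`, and every order-1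
solution has linear coefficient an `l`-th root of unity;
(b) any two order-1 solutions commute. -/
theorem aczel_jabotinsky_normal_form_solutions (l : ℕ) (hl : 1 ≤ l) (δ : k) :
    (∀ c₁ : k, c₁ ^ l = 1 → ∀ c : k, ∃! Φ : PowerSeries k,
        constantCoeff Φ = 0 ∧ coeff 1 Φ = c₁ ∧ coeff (l + 1) Φ = c ∧
        comp (Htilde l δ) Φ = derivativeFun Φ * Htilde l δ) ∧
    (∀ Φ : PowerSeries k,
        constantCoeff Φ = 0 → coeff 1 Φ ≠ 0 →
        comp (Htilde l δ) Φ = derivativeFun Φ * Htilde l δ →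
        (coeff 1 Φ) ^ l = 1) ∧
    (∀ Φ₁ Φ₂ : PowerSeries k,
        constantCoeff Φ₁ = 0 → coeff 1 Φ₁ ≠ 0 →
        constantCoeff Φ₂ = 0 → coeff 1 Φ₂ ≠ 0 →
        comp (Htilde l δ) Φ₁ = derivativeFun Φ₁ * Htilde l δ →
        comp (Htilde l δ) Φ₂ = derivativeFun Φ₂ * Htilde l δ →
        comp Φ₁ Φ₂ = comp Φ₂ Φ₁) := by
  have hiff {Φ : k⟦X⟧} (hΦ : constantCoeff Φ = 0) :
      comp (Htilde l δ) Φ = derivativeFun Φ * Htilde l δ ↔ ajDefect l δ Φ = 0 :=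
    (comp_eq_derivativeFun_mul_iff _ hΦ).trans (isAczelJabotinskySolution_Htilde_iff l δ hΦ)
  refine ⟨fun c₁ hc₁ c ↦ ?_, fun Φ hΦ hΦ1 hE ↦ ?_, fun Φ Ψ hΦ hΦ1 hΨ hΨ1 hEΦ hEΨ ↦ ?_⟩
  · obtain ⟨h0, h1, hc, hE⟩ := ajSolution_spec l δ hl hc₁ c
    refine ⟨ajSolution l δ c₁ c, ⟨h0, h1, hc, (hiff h0).mpr hE⟩, ?_⟩
    rintro Ψ ⟨hΨ0, hΨ1, hΨc, hEΨ⟩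
    exact eq_of_ajDefect_eq_zero l δ hl hΨ0 h0 ((hiff hΨ0).mp hEΨ) hE (hΨ1.trans h1.symm)
      (by rwa [h1]) (hΨc.trans hc.symm)
  · exact pow_eq_one_of_ajDefect_eq_zero l δ hΦ hΦ1 ((hiff hΦ).mp hE)
  · rw [comp_eq_subst _ hΨ, comp_eq_subst _ hΦ]
    exact subst_comm_of_ajDefect_eq_zero l δ hl hΦ hΨ hΦ1 hΨ1 ((hiff hΦ).mp hEΦ) ((hiff hΨ).mp hEΨ)
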